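/- arXiv:2605.15738 — 3 statements merged into one kernel-verified Lean document; each statement's English description precedes it below -/
import Mathlib

section
/- Let Γ be a connected non-complete graph with largest Laplacian eigenvalue μₙ, U a vertex cut with components H₁,…,H_c of Γ−U, and e_i the number of edges from H_i to U. Then μₙ > e_i/|H_i| for every i ∈ {1,…,c}. -/
/-!
Test the Rayleigh quotient of `L(Γ)` on the indicator vector `x` of the vertex set of `H_i`.
Since `H_i` is a component of `Γ - U`, every edge leaving `H_i` ends in `U`, so `xᵀ L x = e_i`
while `xᵀ x = |H_i|`; hence `e_i ≤ μₙ |H_i|`. The inequality is strict because `x` is not an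
eigenvector: another component exists and `Γ` is connected, so some `b ∈ U` is adjacent to `H_i`,
and there `(L x)_b < 0 = μₙ x_b`.
-/

open Finset Matrix BigOperators

/-- The eigenvalues of a Hermitian matrix, sorted in nondecreasing order. -/
noncomputable def sortedEigs {V : Type*} [Fintype V] [DecidableEq V]
    {A : Matrix V V ℝ} (hA : A.IsHermitian) : Fin (Fintype.card V) → ℝ :=
  (hA.eigenvalues ∘ (Fintype.equivFin V).symm) ∘
    Tuple.sort (hA.eigenvalues ∘ (Fintype.equivFin V).symm)

/-- `eig hA k` is the `(k+1)`-st smallest eigenvalue `μ_{k+1}` of `A` (0 outside range). -/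
noncomputable def eig {V : Type*} [Fintype V] [DecidableEq V]
    {A : Matrix V V ℝ} (hA : A.IsHermitian) (k : ℕ) : ℝ :=
  if h : k < Fintype.card V then sortedEigs hA ⟨k, h⟩ else 0

/-- The number of connected components of `Γ - U`. -/
noncomputable def numComponents {V : Type*} [Fintype V] (G : SimpleGraph V) (U : Finset V) : ℕ :=
  Nat.card (G.induce ((↑U : Set V)ᶜ)).ConnectedComponent

/-- The toughness of a graph. -/
noncomputable def toughness {V : Type*} [Fintype V] (G : SimpleGraph V) : ℝ :=
  sInf {t : ℝ | ∃ U : Finset V, 1 < numComponents G U ∧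
    t = (U.card : ℝ) / (numComponents G U : ℝ)}

/-- The number of vertices of a component `H` of `Γ - U`. -/
noncomputable def compSize {V : Type*} [Fintype V] {G : SimpleGraph V} {U : Finset V}
    (C : (G.induce ((↑U : Set V)ᶜ)).ConnectedComponent) : ℕ :=
  Nat.card C.supp

/-- The number of edges joining a component `H` of `Γ - U` to `U`. -/
noncomputable def edgesToCut {V : Type*} [Fintype V] {G : SimpleGraph V} {U : Finset V}
    (C : (G.induce ((↑U : Set V)ᶜ)).ConnectedComponent) : ℕ :=
  Nat.card {p : ((↑U : Set V)ᶜ : Set V) × V // p.1 ∈ C.supp ∧ p.2 ∈ U ∧ G.Adj p.1.1 p.2}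

namespace Matrix.IsHermitian

variable {n : Type*} [Fintype n] [DecidableEq n] {A : Matrix n n ℝ}

theorem posSemidef_smul_one_sub (hA : A.IsHermitian) {μ : ℝ}
    (hμ : ∀ i, hA.eigenvalues i ≤ μ) :
    (μ • 1 - A).PosSemidef := by
  refine posSemidef_iff_isHermitian_and_spectrum_nonneg.mpr
    ⟨(isHermitian_one.smul (IsSelfAdjoint.all μ)).sub hA, ?_⟩
  rw [← Algebra.algebraMap_eq_smul_one, ← spectrum.singleton_sub_eq,
    hA.spectrum_real_eq_range_eigenvalues]
  rintro _ ⟨_, rfl, _, ⟨i, rfl⟩, rfl⟩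
  exact sub_nonneg.mpr (hμ i)

theorem dotProduct_mulVec_lt_of_mulVec_ne (hA : A.IsHermitian) {μ : ℝ}
    (hμ : ∀ i, hA.eigenvalues i ≤ μ) {x : n → ℝ} (hx : A *ᵥ x ≠ μ • x) :
    x ⬝ᵥ A *ᵥ x < μ * (x ⬝ᵥ x) := by
  have hB := hA.posSemidef_smul_one_sub hμ
  have hBx : (μ • 1 - A) *ᵥ x ≠ 0 := by
    rwa [sub_mulVec, smul_mulVec, one_mulVec, sub_ne_zero, ne_comm]
  have hpos : 0 < x ⬝ᵥ (μ • 1 - A) *ᵥ x := by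
    have := hB.dotProduct_mulVec_nonneg x
    have := (hB.dotProduct_mulVec_zero_iff x).not.mpr hBx
    rw [star_trivial] at *
    positivity
  rw [sub_mulVec, smul_mulVec, one_mulVec, dotProduct_sub, dotProduct_smul, smul_eq_mul] at hpos
  linarith

end Matrix.IsHermitian

theorem eigenvalues_le_eig_card_sub_one {V : Type*} [Fintype V] [DecidableEq V]
    {A : Matrix V V ℝ} (hA : A.IsHermitian) (i : V) :
    hA.eigenvalues i ≤ eig hA (Fintype.card V - 1) := by
  have hlt : Fintype.card V - 1 < Fintype.card V :=
    Nat.sub_lt (Fintype.card_pos_iff.mpr ⟨i⟩) one_pos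
  set g := hA.eigenvalues ∘ (Fintype.equivFin V).symm
  have hi :
      hA.eigenvalues i = (g ∘ Tuple.sort g) ((Tuple.sort g)⁻¹ (Fintype.equivFin V i)) := by
    simp [g]
  rw [eig, dif_pos hlt, hi]
  exact Tuple.monotone_sort g (Fin.le_def.mpr (Nat.le_pred_of_lt (Fin.is_lt _)))

theorem dotProduct_indicator_one_self {V : Type*} [Fintype V] (S : Set V)
    [DecidablePred (· ∈ S)] : S.indicator (1 : V → ℝ) ⬝ᵥ S.indicator 1 = Nat.card S := by
  have hsq (v : V) : S.indicator (1 : V → ℝ) v * S.indicator 1 v = S.indicator 1 v := by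
    by_cases hv : v ∈ S <;> simp [hv]
  simp only [dotProduct, hsq]
  simp [Set.indicator_apply, Nat.card_eq_fintype_card, Fintype.card_subtype]

namespace SimpleGraph

variable {V : Type*} {G : SimpleGraph V}

section Indicator

variable [Fintype V] [DecidableEq V] [DecidableRel G.Adj] (S : Set V)

theorem indicator_dotProduct_lapMatrix_mulVec_indicator [DecidablePred (· ∈ S)] :
    S.indicator (1 : V → ℝ) ⬝ᵥ G.lapMatrix ℝ *ᵥ S.indicator 1 =
      Nat.card {p : V × V // p.1 ∈ S ∧ p.2 ∉ S ∧ G.Adj p.1 p.2} := by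
  have hterm (i j : V) : (if G.Adj i j then (S.indicator (1 : V → ℝ) i - S.indicator 1 j) ^ 2
      else 0) = (if i ∈ S ∧ j ∉ S ∧ G.Adj i j then 1 else 0) +
        (if j ∈ S ∧ i ∉ S ∧ G.Adj j i then 1 else 0) := by
    by_cases hij : G.Adj i j <;> by_cases hi : i ∈ S <;> by_cases hj : j ∈ S <;>
      simp [hij, hi, hj, G.adj_comm j i]
  rw [← toLinearMap₂'_apply', lapMatrix_toLinearMap₂']
  simp_rw [hterm, Finset.sum_add_distrib]
  rw [Finset.sum_comm (f := fun i j => if j ∈ S ∧ i ∉ S ∧ G.Adj j i then (1 : ℝ) else 0),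
    add_self_div_two, ← Fintype.sum_prod_type', Finset.sum_boole, Nat.card_eq_fintype_card,
    Fintype.card_subtype]

theorem lapMatrix_mulVec_indicator_ne_smul {a b : V} (ha : a ∈ S) (hb : b ∉ S)
    (hab : G.Adj a b) (μ : ℝ) :
    G.lapMatrix ℝ *ᵥ S.indicator 1 ≠ μ • S.indicator 1 := by
  intro h
  have hb' := congrFun h b
  rw [lapMatrix_mulVec_apply, Pi.smul_apply, Set.indicator_of_notMem hb] at hb'
  have hsum : (1 : ℝ) ≤ ∑ u ∈ G.neighborFinset b, S.indicator 1 u := by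
    calc (1 : ℝ) = S.indicator 1 a := (Set.indicator_of_mem ha (1 : V → ℝ)).symm
      _ ≤ _ := Finset.single_le_sum (fun u _ => Set.indicator_nonneg (fun _ _ => zero_le_one) u)
          ((G.mem_neighborFinset b a).mpr hab.symm)
  simp only [mul_zero, zero_sub, smul_eq_mul, neg_eq_zero] at hb'
  linarith

end Indicator

namespace ConnectedComponent

variable {s : Set V}

theorem mem_image_supp_of_adj {C : (G.induce s).ConnectedComponent} {a b : V}
    (ha : a ∈ Subtype.val '' C.supp) (hab : G.Adj a b) (hb : b ∈ s) :
    b ∈ Subtype.val '' C.supp := by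
  obtain ⟨a, rfl, rfl⟩ := ha
  exact ⟨⟨b, hb⟩,
    (connectedComponentMk_eq_of_adj (G := G.induce s) (w := ⟨b, hb⟩) hab).symm, rfl⟩

theorem exists_adj_notMem_of_ne (hconn : G.Connected) {C D : (G.induce s).ConnectedComponent}
    (hCD : C ≠ D) : ∃ a ∈ Subtype.val '' C.supp, ∃ b ∉ s, G.Adj a b := by
  obtain ⟨c, rfl⟩ := C.exists_rep
  obtain ⟨d, rfl⟩ := D.exists_rep
  have hd : d.1 ∉ Subtype.val '' ((G.induce s).connectedComponentMk c).supp := by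
    rintro ⟨d', hd', hdd'⟩
    obtain rfl : d' = d := Subtype.ext hdd'
    exact hCD hd'.symm
  have hc : c.1 ∈ Subtype.val '' ((G.induce s).connectedComponentMk c).supp := ⟨c, rfl, rfl⟩
  obtain ⟨p⟩ := hconn.preconnected c.1 d.1
  obtain ⟨e, -, he, he'⟩ := p.exists_boundary_dart _ hc hd
  exact ⟨e.fst, he, e.snd, fun hs => he' (mem_image_supp_of_adj he e.adj hs), e.adj⟩

end ConnectedComponent

end SimpleGraph

section CutComponent

variable {V : Type*} [Fintype V] {G : SimpleGraph V} {U : Finset V}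
  (C : (G.induce ((↑U : Set V)ᶜ)).ConnectedComponent)

theorem compSize_eq_card_image_supp : compSize C = Nat.card (Subtype.val '' C.supp) :=
  (Nat.card_image_of_injective Subtype.val_injective _).symm

theorem edgesToCut_eq_card_boundary : edgesToCut C = Nat.card {p : V × V //
    p.1 ∈ Subtype.val '' C.supp ∧ p.2 ∉ Subtype.val '' C.supp ∧ G.Adj p.1 p.2} := by
  have notMem_U {v : V} (hv : v ∈ Subtype.val '' C.supp) : v ∉ (↑U : Set V) := by
    obtain ⟨w, -, rfl⟩ := hv
    exact w.2
  have mem_supp {v : V} (hv : v ∈ Subtype.val '' C.supp) : ⟨v, notMem_U hv⟩ ∈ C.supp := by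
    obtain ⟨w, hw, rfl⟩ := hv
    exact hw
  have mem_U {a b : V} (ha : a ∈ Subtype.val '' C.supp) (hb : b ∉ Subtype.val '' C.supp)
      (hab : G.Adj a b) : b ∈ U := by
    by_contra hbU
    exact hb (C.mem_image_supp_of_adj ha hab hbU)
  exact Nat.card_congr
    { toFun := fun p => ⟨(p.1.1, p.1.2), ⟨p.1.1, p.2.1, rfl⟩,
        fun h => notMem_U h p.2.2.1, p.2.2.2⟩
      invFun := fun p => ⟨(⟨p.1.1, notMem_U p.2.1⟩, p.1.2),
        mem_supp p.2.1, mem_U p.2.1 p.2.2.1 p.2.2.2, p.2.2.2⟩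
      left_inv := fun _ => rfl
      right_inv := fun _ => rfl }

end CutComponent

theorem mu_n_gt_avg_degree_general {V : Type*} [Fintype V] [DecidableEq V]
    (G : SimpleGraph V) [DecidableRel G.Adj]
    (hconn : G.Connected)
    (U : Finset V) (hcut : 1 < numComponents G U)
    (C : (G.induce ((↑U : Set V)ᶜ)).ConnectedComponent) :
    eig (Matrix.PosSemidef.isHermitian (G.posSemidef_lapMatrix ℝ)) (Fintype.card V - 1) >
      (edgesToCut C : ℝ) / (compSize C : ℝ) := by
  classical
  set S : Set V := Subtype.val '' C.supp
  have : Nontrivial (G.induce ((↑U : Set V)ᶜ)).ConnectedComponent :=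
    Finite.one_lt_card_iff_nontrivial.mp hcut
  obtain ⟨D, hDC⟩ := exists_ne C
  obtain ⟨a, haS, b, hbU, hab⟩ := C.exists_adj_notMem_of_ne hconn hDC.symm
  have hbS : b ∉ S := fun ⟨w, _, hw⟩ => hbU (hw ▸ w.2)
  have hsize : (0 : ℝ) < compSize C := by
    rw [compSize_eq_card_image_supp, Nat.cast_pos, Nat.card_pos_iff]
    exact ⟨⟨⟨a, haS⟩⟩, Set.toFinite S⟩
  have hrayleigh := (G.posSemidef_lapMatrix ℝ).isHermitian.dotProduct_mulVec_lt_of_mulVec_ne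
    (eigenvalues_le_eig_card_sub_one _) (G.lapMatrix_mulVec_indicator_ne_smul S haS hbS hab _)
  rw [G.indicator_dotProduct_lapMatrix_mulVec_indicator, dotProduct_indicator_one_self,
    ← edgesToCut_eq_card_boundary, ← compSize_eq_card_image_supp] at hrayleigh
  rwa [gt_iff_lt, div_lt_iff₀ hsize]

/-- For any vertex cut `U` and any component `H` of `Γ - U`, `μ_n > e(H)/|H|`. -/
theorem mu_n_gt_avg_degree {V : Type*} [Fintype V] [DecidableEq V]
    (G : SimpleGraph V) [DecidableRel G.Adj]
    (hconn : G.Connected) (hnc : G ≠ ⊤)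
    (U : Finset V) (hcut : 1 < numComponents G U)
    (C : (G.induce ((↑U : Set V)ᶜ)).ConnectedComponent) :
    eig (Matrix.PosSemidef.isHermitian (G.posSemidef_lapMatrix ℝ)) (Fintype.card V - 1) >
      (edgesToCut C : ℝ) / (compSize C : ℝ) :=
  mu_n_gt_avg_degree_general G hconn U hcut C
end

section
/- Let Γ be a connected non-complete graph with minimum degree δ and Laplacian eigenvalues 0 = μ₁ < μ₂ ≤ ⋯ ≤ μₙ. Let U be a vertex cut with components H₁,…,H_c of Γ−U and e_i the number of edges from H_i to U. Then ∑_{i=1}^{c} e_i/|H_i| ≤ (μₙ − δ)|U|. -/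
open Finset Matrix BigOperators

/-!
Test the Laplacian quadratic form, which is at most `μₙ ‖x‖²`, on the vector equal to `1` on `U`
and to `-tᵢ` on `Hᵢ`: only the edges between `U` and the components contribute, so
`∑ eᵢ (1 + tᵢ)² ≤ μₙ (|U| + ∑ |Hᵢ| tᵢ²)` for every `t`. The optimal choice
`tᵢ = eᵢ / (μₙ |Hᵢ| - eᵢ)` turns this into `∑ eᵢ / (μₙ - eᵢ/|Hᵢ|) ≤ |U|`. Each summand is at least
`(eᵢ/|Hᵢ|) / (μₙ - δ)`, because a vertex of `Hᵢ` has at most `|Hᵢ| - 1` neighbours outside `U`, so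
`eᵢ/|Hᵢ| ≥ δ - |Hᵢ| + 1`, and because `μₙ ≥ d(v) + 1` for every non-isolated vertex `v` (the same
test with `U = {v}` and `t = 1/d(v)` on the neighbours of `v`).
-/

namespace Matrix.IsHermitian

variable {n : Type*} [Fintype n] [DecidableEq n] {A : Matrix n n ℝ}

theorem dotProduct_mulVec_le (hA : A.IsHermitian) {c : ℝ} (hc : ∀ i, hA.eigenvalues i ≤ c)
    (x : n → ℝ) : x ⬝ᵥ (A *ᵥ x) ≤ c * (x ⬝ᵥ x) := by
  set P : Matrix n n ℝ := (hA.eigenvectorUnitary : Matrix n n ℝ)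
  set y : n → ℝ := star P *ᵥ x with hy
  have hxP : x ᵥ* P = y := by
    rw [hy, star_eq_conjTranspose, conjTranspose_eq_transpose_of_trivial, mulVec_transpose]
  have hform : x ⬝ᵥ (A *ᵥ x) = ∑ i, hA.eigenvalues i * y i ^ 2 := by
    conv_lhs => rw [hA.spectral_theorem, Unitary.conjStarAlgAut_apply]
    rw [← mulVec_mulVec, ← mulVec_mulVec, dotProduct_mulVec, hxP]
    simp only [dotProduct, mulVec_diagonal, Function.comp_apply, RCLike.ofReal_real_eq_id, id]
    exact sum_congr rfl fun i _ => by ring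
  have hnorm : x ⬝ᵥ x = ∑ i, y i ^ 2 := by
    have hyy : y ⬝ᵥ y = x ⬝ᵥ x := by
      nth_rewrite 1 [← hxP]
      rw [hy, dotProduct_mulVec, vecMul_vecMul,
        Matrix.mem_unitaryGroup_iff.mp hA.eigenvectorUnitary.2, vecMul_one]
    rw [← hyy]
    simp only [dotProduct, sq]
  rw [hform, hnorm, mul_sum]
  exact sum_le_sum fun i _ => mul_le_mul_of_nonneg_right (hc i) (sq_nonneg _)

theorem eigenvalues_le_eig_card_sub_one (hA : A.IsHermitian) (i : n) :
    hA.eigenvalues i ≤ eig hA (Fintype.card n - 1) := by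
  have hlt : Fintype.card n - 1 < Fintype.card n := Nat.sub_lt (Fintype.card_pos_iff.2 ⟨i⟩) one_pos
  set f := hA.eigenvalues ∘ (Fintype.equivFin n).symm
  set j := (Tuple.sort f).symm (Fintype.equivFin n i)
  have hj : sortedEigs hA j = hA.eigenvalues i := by
    simp [sortedEigs, j, f]
  rw [eig, dif_pos hlt, ← hj]
  exact Tuple.monotone_sort f (Nat.le_sub_one_of_lt j.2)

end Matrix.IsHermitian

namespace SimpleGraph

variable {V : Type*} [Fintype V] (G : SimpleGraph V) [DecidableRel G.Adj]

theorem card_filter_adj_le_degree (U : Finset V) (v : V) : #{u ∈ U | G.Adj v u} ≤ G.degree v := by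
  rw [← G.card_neighborFinset_eq_degree]
  exact card_le_card fun u hu => (G.mem_neighborFinset v u).2 (mem_filter.1 hu).2

variable [DecidableEq V]

theorem sum_compl_sum_adj_sq_le (U : Finset V) (x : V → ℝ) :
    ∑ i ∈ Uᶜ, ∑ j ∈ U, (if G.Adj i j then (x i - x j) ^ 2 else 0)
      ≤ x ⬝ᵥ (G.lapMatrix ℝ *ᵥ x) := by
  set F : V → V → ℝ := fun i j => if G.Adj i j then (x i - x j) ^ 2 else 0
  have hF : ∀ i j, 0 ≤ F i j := fun i j => by positivity
  have hsymm : ∀ i j, F i j = F j i := fun i j => by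
    simp only [F, G.adj_comm i j]; split_ifs <;> ring
  have hsplit : ∑ i ∈ U, ∑ j ∈ Uᶜ, F i j + ∑ i ∈ Uᶜ, ∑ j ∈ U, F i j ≤ ∑ i, ∑ j, F i j := by
    rw [← sum_add_sum_compl U]
    exact add_le_add (sum_le_sum fun i _ => sum_le_univ_sum_of_nonneg (hF i))
      (sum_le_sum fun i _ => sum_le_univ_sum_of_nonneg (hF i))
  have hswap : ∑ i ∈ U, ∑ j ∈ Uᶜ, F i j = ∑ i ∈ Uᶜ, ∑ j ∈ U, F i j := by
    rw [sum_comm]; simp only [hsymm]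
  rw [← toLinearMap₂'_apply', lapMatrix_toLinearMap₂']
  linarith

variable {G} in
theorem sum_compl_card_adj_mul_sq_le {μ : ℝ}
    (hμ : ∀ x : V → ℝ, x ⬝ᵥ (G.lapMatrix ℝ *ᵥ x) ≤ μ * (x ⬝ᵥ x)) (U : Finset V) (s : V → ℝ) :
    ∑ w ∈ Uᶜ, (#{u ∈ U | G.Adj w u} : ℝ) * (1 + s w) ^ 2
      ≤ μ * (#U + ∑ w ∈ Uᶜ, s w ^ 2) := by
  set x : V → ℝ := fun v => if v ∈ U then 1 else -s v
  have hcut : ∑ i ∈ Uᶜ, ∑ j ∈ U, (if G.Adj i j then (x i - x j) ^ 2 else 0)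
      = ∑ w ∈ Uᶜ, (#{u ∈ U | G.Adj w u} : ℝ) * (1 + s w) ^ 2 := by
    refine sum_congr rfl fun i hi => ?_
    rw [← sum_filter, ← nsmul_eq_mul, ← sum_const]
    refine sum_congr rfl fun j hj => ?_
    simp only [x, if_pos (mem_filter.1 hj).1, if_neg (mem_compl.1 hi)]
    ring
  have hnorm : x ⬝ᵥ x = #U + ∑ w ∈ Uᶜ, s w ^ 2 := by
    rw [dotProduct, ← sum_add_sum_compl U, card_eq_sum_ones, Nat.cast_sum, Nat.cast_one]
    congr 1 <;> refine sum_congr rfl fun v hv => ?_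
    · simp [x, hv]
    · simp [x, mem_compl.1 hv, sq]
  rw [← hcut, ← hnorm]
  exact (G.sum_compl_sum_adj_sq_le U x).trans (hμ x)

theorem card_filter_adj_compl_singleton (v : V) : #{w ∈ {v}ᶜ | G.Adj v w} = G.degree v := by
  rw [← card_neighborFinset_eq_degree]
  congr 1; ext w
  simp only [mem_filter, mem_compl, mem_singleton, mem_neighborFinset]
  exact ⟨And.right, fun h => ⟨h.ne', h⟩⟩

variable {G} in
theorem degree_add_one_le {μ : ℝ}
    (hμ : ∀ x : V → ℝ, x ⬝ᵥ (G.lapMatrix ℝ *ᵥ x) ≤ μ * (x ⬝ᵥ x)) {v : V} (hv : 0 < G.degree v) :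
    (G.degree v : ℝ) + 1 ≤ μ := by
  set d : ℝ := (G.degree v : ℝ)
  have hd : 0 < d := Nat.cast_pos.mpr hv
  have key := sum_compl_card_adj_mul_sq_le hμ {v} fun w => if G.Adj v w then d⁻¹ else 0
  have hsum : ∀ c : ℝ, ∑ w ∈ {v}ᶜ, (if G.Adj v w then c else 0) = d * c := fun c => by
    rw [← sum_filter, sum_const, card_filter_adj_compl_singleton, nsmul_eq_mul]
  have hlhs : ∑ w ∈ ({v}ᶜ : Finset V), (#{u ∈ {v} | G.Adj w u} : ℝ) *
      (1 + if G.Adj v w then d⁻¹ else 0) ^ 2 = d * (1 + d⁻¹) ^ 2 := by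
    rw [← hsum]
    refine sum_congr rfl fun w _ => ?_
    by_cases h : G.Adj v w
    · simp [filter_singleton, h, h.symm]
    · simp [filter_singleton, h, G.adj_comm w v]
  rw [hlhs] at key
  simp only [ite_pow, ne_eq, OfNat.ofNat_ne_zero, not_false_eq_true, zero_pow, hsum,
    card_singleton, Nat.cast_one] at key
  have hrhs : μ * (1 + d * d⁻¹ ^ 2) = μ * ((d + 1) / d) := by field_simp
  have hlhs' : d * (1 + d⁻¹) ^ 2 = (d + 1) * ((d + 1) / d) := by field_simp
  rw [hrhs, hlhs'] at key
  exact le_of_mul_le_mul_right key (by positivity)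

end SimpleGraph

theorem nontrivial_of_one_lt_numComponents {V : Type*} [Fintype V] {G : SimpleGraph V}
    {U : Finset V} (h : 1 < numComponents G U) : Nontrivial V := by
  have : Nontrivial (G.induce ((↑U : Set V)ᶜ)).ConnectedComponent :=
    Finite.one_lt_card_iff_nontrivial.mp h
  have : Nontrivial ((↑U : Set V)ᶜ : Set V) :=
    Function.Surjective.nontrivial (f := (G.induce _).connectedComponentMk) fun C => C.exists_rep
  exact (Subtype.val_injective (p := (· ∈ ((↑U : Set V)ᶜ)))).nontrivial

section VertexCut

variable {V : Type*} [Fintype V] [DecidableEq V] {G : SimpleGraph V} [DecidableRel G.Adj]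
  {U : Finset V}

theorem compSize_eq_card (C : (G.induce ((↑U : Set V)ᶜ)).ConnectedComponent) :
    compSize C = Fintype.card C.supp :=
  Nat.card_eq_fintype_card

theorem edgesToCut_eq_sum (C : (G.induce ((↑U : Set V)ᶜ)).ConnectedComponent) :
    edgesToCut C = ∑ w : C.supp, #{u ∈ U | G.Adj w u} := by
  let e : {p : ((↑U : Set V)ᶜ : Set V) × V // p.1 ∈ C.supp ∧ p.2 ∈ U ∧ G.Adj p.1.1 p.2} ≃
      Σ w : C.supp, {u // u ∈ U ∧ G.Adj w u} :=
    { toFun := fun p => ⟨⟨p.1.1, p.2.1⟩, p.1.2, p.2.2⟩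
      invFun := fun q => ⟨(q.1.1, q.2.1), q.1.2, q.2.2⟩
      left_inv := fun _ => rfl
      right_inv := fun _ => rfl }
  rw [edgesToCut, Nat.card_congr e, Nat.card_sigma]
  simp only [Nat.card_eq_fintype_card, Fintype.card_subtype]
  congr! 2 with w
  ext u
  simp

theorem sum_compl_eq_sum_sum_supp {M : Type*} [AddCommMonoid M] (f : V → M) :
    ∑ v ∈ Uᶜ, f v = ∑ C : (G.induce ((↑U : Set V)ᶜ)).ConnectedComponent, ∑ w : C.supp, f w := by
  classical
  rw [Finset.sum_subtype Uᶜ (p := (· ∈ ((↑U : Set V)ᶜ))) (by simp),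
    ← Fintype.sum_fiberwise (G.induce ((↑U : Set V)ᶜ)).connectedComponentMk]
  congr!

theorem edgesToCut_le_compSize_mul_maxDegree
    (C : (G.induce ((↑U : Set V)ᶜ)).ConnectedComponent) :
    edgesToCut C ≤ compSize C * G.maxDegree := by
  rw [edgesToCut_eq_sum, compSize_eq_card, ← smul_eq_mul, ← card_univ, ← sum_const]
  exact sum_le_sum fun w _ => (G.card_filter_adj_le_degree U _).trans (G.degree_le_maxDegree _)

theorem degree_add_one_le_card_filter_adj_add_compSize (w : ((↑U : Set V)ᶜ : Set V)) :
    G.degree w + 1 ≤ #{u ∈ U | G.Adj w u} + compSize ((G.induce _).connectedComponentMk w) := by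
  set C := (G.induce ((↑U : Set V)ᶜ)).connectedComponentMk w
  have hsplit := card_filter_add_card_filter_not (s := G.neighborFinset w) (p := (· ∈ U))
  have hU : {u ∈ G.neighborFinset w | u ∈ U} = {u ∈ U | G.Adj w u} := by
    ext u; simp [and_comm]
  have houtside : insert w.1 {u ∈ G.neighborFinset w | u ∉ U} ⊆
      (univ.filter (· ∈ C.supp)).map (Function.Embedding.subtype _) := by
    intro u hu
    simp only [mem_insert, mem_filter, SimpleGraph.mem_neighborFinset] at hu
    simp only [mem_map, mem_filter, mem_univ, true_and, Function.Embedding.coe_subtype]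
    rcases hu with rfl | ⟨hadj, hu⟩
    · exact ⟨w, rfl, rfl⟩
    · exact ⟨⟨u, hu⟩, (SimpleGraph.ConnectedComponent.connectedComponentMk_eq_of_adj
        (by simpa using hadj)).symm, rfl⟩
  have hcard := card_le_card houtside
  rw [card_insert_of_notMem (by simp), card_map, ← Fintype.card_subtype, ← compSize_eq_card] at hcard
  rw [← G.card_neighborFinset_eq_degree, ← hsplit, hU]
  omega

theorem compSize_mul_minDegree_add_one_le (C : (G.induce ((↑U : Set V)ᶜ)).ConnectedComponent) :
    compSize C * (G.minDegree + 1) ≤ edgesToCut C + compSize C ^ 2 := by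
  have hvertex : ∀ w : C.supp, G.minDegree + 1 ≤ #{u ∈ U | G.Adj w u} + compSize C := fun w => by
    have := degree_add_one_le_card_filter_adj_add_compSize (G := G) w.1
    rw [w.2] at this
    have := G.minDegree_le_degree w
    omega
  calc compSize C * (G.minDegree + 1) = ∑ _w : C.supp, (G.minDegree + 1) := by
        rw [sum_const, card_univ, compSize_eq_card, smul_eq_mul]
    _ ≤ ∑ w : C.supp, (#{u ∈ U | G.Adj w u} + compSize C) := sum_le_sum fun w _ => hvertex w
    _ = edgesToCut C + compSize C ^ 2 := by
        rw [sum_add_distrib, ← edgesToCut_eq_sum, sum_const, card_univ, ← compSize_eq_card,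
          smul_eq_mul, sq]

theorem sum_edgesToCut_mul_sq_le {μ : ℝ}
    (hμ : ∀ x : V → ℝ, x ⬝ᵥ (G.lapMatrix ℝ *ᵥ x) ≤ μ * (x ⬝ᵥ x))
    (t : (G.induce ((↑U : Set V)ᶜ)).ConnectedComponent → ℝ) :
    ∑ C, (edgesToCut C : ℝ) * (1 + t C) ^ 2 ≤ μ * (#U + ∑ C, (compSize C : ℝ) * t C ^ 2) := by
  set s : V → ℝ := fun v => if h : v ∈ U then 0 else t ((G.induce _).connectedComponentMk ⟨v, h⟩)
  have hs : ∀ C, ∀ w : C.supp, s w = t C := fun C w => (dif_neg w.1.2).trans (congrArg t w.2)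
  have key := SimpleGraph.sum_compl_card_adj_mul_sq_le hμ U s
  simp only [sum_compl_eq_sum_sum_supp (G := G), hs] at key
  simpa [← sum_mul, edgesToCut_eq_sum, compSize_eq_card] using key

end VertexCut

theorem sum_div_sub_div_le_of_forall_sum_le {ι : Type*} [Fintype ι] {e h : ι → ℝ} {μ u : ℝ}
    (hμ : 0 < μ) (hh : ∀ i, h i ≠ 0) (he : ∀ i, e i ≠ μ * h i)
    (H : ∀ t : ι → ℝ, ∑ i, e i * (1 + t i) ^ 2 ≤ μ * (u + ∑ i, h i * t i ^ 2)) :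
    ∑ i, e i / (μ - e i / h i) ≤ u := by
  have hopt : ∀ i, e i * (1 + e i / (μ * h i - e i)) ^ 2
      = μ * (e i / (μ - e i / h i)) + μ * (h i * (e i / (μ * h i - e i)) ^ 2) := fun i => by
    have := hh i
    have : μ * h i - e i ≠ 0 := sub_ne_zero.2 (he i).symm
    field_simp
    ring
  have key := H fun i => e i / (μ * h i - e i)
  simp only [hopt, sum_add_distrib, ← mul_sum, mul_add] at key
  exact le_of_mul_le_mul_left (by linarith) hμ

theorem div_le_mul_div_sub_div {e h μ δ : ℝ} (hh : 1 ≤ h) (he : 0 ≤ e) (heμ : e < μ * h)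
    (hδμ : δ + 1 ≤ μ) (hδ : h * (δ + 1) ≤ e + h ^ 2) :
    e / h ≤ (μ - δ) * (e / (μ - e / h)) := by
  have hpos : 0 < μ * h - e := sub_pos.2 heμ
  have hrw : e / (μ - e / h) = e * h / (μ * h - e) := by
    have : h ≠ 0 := by positivity
    field_simp
  have hgap : μ * h - e ≤ (μ - δ) * h ^ 2 := by
    nlinarith [mul_nonneg (sub_nonneg.2 hh) (by linarith : 0 ≤ μ - δ - 1)]
  rw [hrw, mul_div_assoc', div_le_div_iff₀ (by positivity) hpos]
  nlinarith [mul_le_mul_of_nonneg_left hgap he]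

theorem sum_avg_degree_bound_general {V : Type*} [Fintype V] [DecidableEq V]
    (G : SimpleGraph V) [DecidableRel G.Adj]
    (hconn : G.Connected)
    (U : Finset V) (hcut : 1 < numComponents G U) :
    ∑ᶠ C : (G.induce ((↑U : Set V)ᶜ)).ConnectedComponent,
        (edgesToCut C : ℝ) / (compSize C : ℝ)
      ≤ (eig (Matrix.PosSemidef.isHermitian (G.posSemidef_lapMatrix ℝ)) (Fintype.card V - 1)
          - (G.minDegree : ℝ)) * (U.card : ℝ) := by
  have := nontrivial_of_one_lt_numComponents hcut
  set hL := (G.posSemidef_lapMatrix ℝ).isHermitian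
  set μ := eig hL (Fintype.card V - 1)
  have hμ (x : V → ℝ) : x ⬝ᵥ (G.lapMatrix ℝ *ᵥ x) ≤ μ * (x ⬝ᵥ x) :=
    hL.dotProduct_mulVec_le (hL.eigenvalues_le_eig_card_sub_one) x
  obtain ⟨v, hv⟩ := G.exists_maximal_degree_vertex
  have hΔ : (G.maxDegree : ℝ) + 1 ≤ μ :=
    hv ▸ SimpleGraph.degree_add_one_le hμ (hconn.preconnected.degree_pos_of_nontrivial v)
  have hδ : (G.minDegree : ℝ) + 1 ≤ μ := by
    have : (G.minDegree : ℝ) ≤ G.maxDegree := by exact_mod_cast G.minDegree_le_maxDegree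
    linarith
  have hsize (C : (G.induce ((↑U : Set V)ᶜ)).ConnectedComponent) : 1 ≤ (compSize C : ℝ) := by
    rw [compSize_eq_card, Nat.one_le_cast]
    exact Fintype.card_pos_iff.2 C.nonempty_supp.to_subtype
  have hedges (C : (G.induce ((↑U : Set V)ᶜ)).ConnectedComponent) :
      (edgesToCut C : ℝ) < μ * compSize C := by
    have : (edgesToCut C : ℝ) ≤ compSize C * G.maxDegree := by
      exact_mod_cast edgesToCut_le_compSize_mul_maxDegree C
    nlinarith [hsize C]
  rw [finsum_eq_sum_of_fintype]
  calc ∑ C, (edgesToCut C : ℝ) / compSize C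
      ≤ ∑ C, (μ - G.minDegree) * (edgesToCut C / (μ - edgesToCut C / compSize C)) :=
        sum_le_sum fun C _ => div_le_mul_div_sub_div (hsize C) (Nat.cast_nonneg _) (hedges C) hδ
          (by exact_mod_cast compSize_mul_minDegree_add_one_le C)
    _ = (μ - G.minDegree) * ∑ C, (edgesToCut C / (μ - edgesToCut C / compSize C)) :=
        (mul_sum ..).symm
    _ ≤ (μ - G.minDegree) * #U :=
        mul_le_mul_of_nonneg_left (sum_div_sub_div_le_of_forall_sum_le (by linarith)
          (fun C => by linarith [hsize C]) (fun C => (hedges C).ne)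
          (sum_edgesToCut_mul_sq_le hμ)) (by linarith)

/-- Key upper bound: `∑_i e_i/|H_i| ≤ (μ_n - δ)|U|`. -/
theorem sum_avg_degree_bound {V : Type*} [Fintype V] [DecidableEq V]
    (G : SimpleGraph V) [DecidableRel G.Adj]
    (hconn : G.Connected) (hnc : G ≠ ⊤)
    (U : Finset V) (hcut : 1 < numComponents G U) :
    ∑ᶠ C : (G.induce ((↑U : Set V)ᶜ)).ConnectedComponent,
        (edgesToCut C : ℝ) / (compSize C : ℝ)
      ≤ (eig (Matrix.PosSemidef.isHermitian (G.posSemidef_lapMatrix ℝ)) (Fintype.card V - 1)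
          - (G.minDegree : ℝ)) * (U.card : ℝ) :=
  sum_avg_degree_bound_general G hconn U hcut
end

section
/- Let Γ be a connected non-complete graph with Laplacian eigenvalues 0 = μ₁ < μ₂ ≤ ⋯ ≤ μₙ. Let U be a vertex cut with components H₁,…,H_c of Γ−U and e_i the number of edges from H_i to U. Then for any distinct indices i, j ∈ {1,…,c}, (e_i/|H_i| − μ₂)|H_j| + (e_j/|H_j| − μ₂)|H_i| ≥ 0. In particular, at most one index i satisfies e_i/|H_i| < μ₂. -/
/-!
For distinct components `C`, `D` of `Γ - U`, the vector `x = |D| 𝟙_C - |C| 𝟙_D` sums to zero,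
so the Rayleigh quotient gives `μ₂ ‖x‖² ≤ xᵀ L x`, where `‖x‖² = |C||D|² + |D||C|²`. Since `x`
vanishes on `U` and is constant on each component of `Γ - U`, only edges between a component and
`U` contribute to `xᵀ L x`, which is therefore `e_C |D|² + e_D |C|²`. Dividing by `|C||D|` gives
the inequality; two components with `e/|H| < μ₂` would make its left-hand side negative.
-/

open Finset Matrix BigOperators

theorem OrthonormalBasis.sum_dotProduct_mul_dotProduct {ι V : Type*} [Fintype ι] [Fintype V]
    (b : OrthonormalBasis ι ℝ (EuclideanSpace ℝ V)) (x y : V → ℝ) :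
    ∑ k, (x ⬝ᵥ ⇑(b k)) * (⇑(b k) ⬝ᵥ y) = x ⬝ᵥ y := by
  simpa only [EuclideanSpace.inner_eq_star_dotProduct, star_trivial, dotProduct_comm, mul_comm]
    using b.sum_inner_mul_inner (WithLp.toLp 2 x) (WithLp.toLp 2 y)

theorem Fintype.sum_eq_sum_subtype_of_eq_zero {V M : Type*} [Fintype V] [AddCommMonoid M]
    {s : Set V} [Fintype s] {F : V → M} (hF : ∀ v ∉ s, F v = 0) :
    ∑ v, F v = ∑ i : s, F i := by
  rw [Finset.sum_set_coe]
  refine (Fintype.sum_subset fun v hv => ?_).symm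
  simpa using not_imp_comm.mp (hF v) hv

theorem Fintype.sum_extend_zero {V M : Type*} [Fintype V] [AddCommMonoid M]
    {s : Set V} [Fintype s] (f : s → M) :
    ∑ v, Function.extend Subtype.val f 0 v = ∑ i, f i := by
  rw [sum_eq_sum_subtype_of_eq_zero (F := Function.extend Subtype.val f 0) fun v hv =>
    Function.extend_apply' _ _ _ fun ⟨i, hi⟩ => hv (hi ▸ i.2)]
  simp only [Subtype.val_injective.extend_apply]

theorem Matrix.extend_zero_dotProduct_extend_zero {V R : Type*} [Fintype V]
    [NonUnitalSemiring R] {s : Set V} [Fintype s] (f g : s → R) :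
    Function.extend Subtype.val f 0 ⬝ᵥ Function.extend Subtype.val g 0 = ∑ i, f i * g i := by
  rw [dotProduct, Fintype.sum_eq_sum_subtype_of_eq_zero fun v hv => by
    rw [Function.extend_apply' _ _ _ fun ⟨i, hi⟩ => hv (hi ▸ i.2), Pi.zero_apply, zero_mul]]
  simp only [Subtype.val_injective.extend_apply]

namespace Matrix.IsHermitian

variable {V : Type*} [Fintype V] [DecidableEq V] {A : Matrix V V ℝ} (hA : A.IsHermitian)

theorem dotProduct_self_eq_sum_sq (x : V → ℝ) :
    x ⬝ᵥ x = ∑ k, (⇑(hA.eigenvectorBasis k) ⬝ᵥ x) ^ 2 := by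
  rw [← hA.eigenvectorBasis.sum_dotProduct_mul_dotProduct]
  simp only [dotProduct_comm x, sq]

theorem dotProduct_mulVec_eq_sum_eigenvalues_mul_sq (x : V → ℝ) :
    x ⬝ᵥ (A *ᵥ x) = ∑ k, hA.eigenvalues k * (⇑(hA.eigenvectorBasis k) ⬝ᵥ x) ^ 2 := by
  rw [← hA.eigenvectorBasis.sum_dotProduct_mul_dotProduct]
  refine Finset.sum_congr rfl fun k _ => ?_
  rw [dotProduct_mulVec, ← mulVec_transpose, (isHermitian_iff_isSymm.mp hA).eq,
    mulVec_eigenvectorBasis, smul_dotProduct, dotProduct_comm x, smul_eq_mul]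
  ring

theorem monotone_sortedEigs : Monotone (sortedEigs hA) :=
  Tuple.monotone_sort _

theorem exists_sortedEigs_eq (k : V) : ∃ p, sortedEigs hA p = hA.eigenvalues k :=
  ⟨(Tuple.sort (hA.eigenvalues ∘ (Fintype.equivFin V).symm))⁻¹ (Fintype.equivFin V k),
    by simp [sortedEigs]⟩

theorem eig_zero_le (k : V) : eig hA 0 ≤ hA.eigenvalues k := by
  obtain ⟨p, hp⟩ := hA.exists_sortedEigs_eq k
  rw [eig, dif_pos p.pos, ← hp]
  exact hA.monotone_sortedEigs (Fin.le_def.mpr (Nat.zero_le _))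

theorem exists_eigenvalues_eq_eig_zero [Nonempty V] : ∃ k, hA.eigenvalues k = eig hA 0 :=
  ⟨_, by rw [eig, dif_pos Fintype.card_pos]; rfl⟩

theorem eig_one_le_of_ne_eig_zero {k : V} (hk : hA.eigenvalues k ≠ eig hA 0) :
    eig hA 1 ≤ hA.eigenvalues k := by
  obtain ⟨p, hp⟩ := hA.exists_sortedEigs_eq k
  have hp0 : p.val ≠ 0 := fun h =>
    hk (by rw [← hp, eig, dif_pos (h ▸ p.pos)]; exact congrArg _ (Fin.ext h))
  rw [eig, dif_pos (by omega), ← hp]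
  exact hA.monotone_sortedEigs (Fin.le_def.mpr (by simp only; omega))

end Matrix.IsHermitian

namespace SimpleGraph

variable {V : Type*} [Fintype V] {G : SimpleGraph V} {U : Finset V}

theorem compSize_pos (C : (G.induce ((↑U : Set V)ᶜ)).ConnectedComponent) : 0 < compSize C :=
  have : Nonempty C.supp := C.nonempty_supp.to_subtype
  Nat.card_pos

theorem compSize_eq_sum [DecidableEq V]
    [DecidableEq (G.induce ((↑U : Set V)ᶜ)).ConnectedComponent]
    (C : (G.induce ((↑U : Set V)ᶜ)).ConnectedComponent) :
    (compSize C : ℝ) =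
      ∑ i, if (G.induce ((↑U : Set V)ᶜ)).connectedComponentMk i = C then 1 else 0 := by
  simp only [compSize, ConnectedComponent.supp, Nat.card_eq_fintype_card, Fintype.card_subtype,
    Finset.sum_boole, Set.mem_ofPred_eq]

variable [DecidableEq V] [DecidableRel G.Adj]

theorem edgesToCut_eq_sum [DecidableEq (G.induce ((↑U : Set V)ᶜ)).ConnectedComponent]
    (C : (G.induce ((↑U : Set V)ᶜ)).ConnectedComponent) :
    (edgesToCut C : ℝ) = ∑ i, ∑ j,
      if (G.induce ((↑U : Set V)ᶜ)).connectedComponentMk i = C ∧ j ∈ U ∧ G.Adj i j then 1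
      else 0 := by
  rw [edgesToCut, Nat.card_eq_fintype_card, Fintype.card_subtype, Finset.card_filter,
    Fintype.sum_prod_type]
  push_cast
  simp only [ConnectedComponent.mem_supp_iff]

theorem eig_lapMatrix_zero [Nonempty V] : eig (G.posSemidef_lapMatrix ℝ).isHermitian 0 = 0 := by
  set hL := (G.posSemidef_lapMatrix ℝ).isHermitian
  obtain ⟨k, hk⟩ : ∃ k, hL.eigenvalues k = 0 := by
    have := G.det_lapMatrix_eq_zero
    rw [hL.det_eq_prod_eigenvalues, Finset.prod_eq_zero_iff] at this
    obtain ⟨k, -, hk⟩ := this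
    exact ⟨k, by exact_mod_cast hk⟩
  obtain ⟨k₀, hk₀⟩ := hL.exists_eigenvalues_eq_eig_zero
  exact le_antisymm (hk ▸ hL.eig_zero_le k)
    (hk₀ ▸ (G.posSemidef_lapMatrix ℝ).eigenvalues_nonneg k₀)

theorem Connected.dotProduct_eq_zero_of_lapMatrix_mulVec_eq_zero (hconn : G.Connected)
    {v x : V → ℝ} (hv : G.lapMatrix ℝ *ᵥ v = 0) (hx : ∑ i, x i = 0) : v ⬝ᵥ x = 0 := by
  obtain ⟨i₀⟩ := hconn.nonempty
  have hconst : ∀ i, v i = v i₀ :=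
    fun i => (lapMatrix_mulVec_eq_zero_iff_forall_reachable G).mp hv i i₀ (hconn i i₀)
  simp only [dotProduct, hconst, ← Finset.mul_sum, hx, mul_zero]

theorem Connected.eig_one_mul_dotProduct_le_of_sum_eq_zero (hconn : G.Connected) {x : V → ℝ}
    (hx : ∑ i, x i = 0) :
    eig (G.posSemidef_lapMatrix ℝ).isHermitian 1 * (x ⬝ᵥ x) ≤ x ⬝ᵥ (G.lapMatrix ℝ *ᵥ x) := by
  set hL := (G.posSemidef_lapMatrix ℝ).isHermitian
  have : Nonempty V := hconn.nonempty
  rw [hL.dotProduct_self_eq_sum_sq, hL.dotProduct_mulVec_eq_sum_eigenvalues_mul_sq,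
    Finset.mul_sum]
  refine Finset.sum_le_sum fun k _ => ?_
  by_cases hk : hL.eigenvalues k = 0
  · have hker : G.lapMatrix ℝ *ᵥ ⇑(hL.eigenvectorBasis k) = 0 := by
      rw [hL.mulVec_eigenvectorBasis, hk, zero_smul]
    simp [hconn.dotProduct_eq_zero_of_lapMatrix_mulVec_eq_zero hker hx]
  · have := hL.eig_one_le_of_ne_eig_zero (k := k) (by rwa [eig_lapMatrix_zero])
    exact mul_le_mul_of_nonneg_right this (sq_nonneg _)

theorem extend_dotProduct_lapMatrix_mulVec_extend (f : ((↑U : Set V)ᶜ : Set V) → ℝ)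
    (hf : ∀ i j, (G.induce ((↑U : Set V)ᶜ)).Adj i j → f i = f j) :
    Function.extend Subtype.val f 0 ⬝ᵥ (G.lapMatrix ℝ *ᵥ Function.extend Subtype.val f 0) =
      ∑ i : ((↑U : Set V)ᶜ : Set V), ∑ j, if j ∈ U ∧ G.Adj i j then f i ^ 2 else 0 := by
  set x : V → ℝ := Function.extend Subtype.val f 0
  have hxU : ∀ v ∈ U, x v = 0 := fun v hv =>
    Function.extend_apply' _ _ _ (by rintro ⟨i, rfl⟩; exact i.2 hv)
  have hx : ∀ i : ((↑U : Set V)ᶜ : Set V), x i = f i :=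
    fun i => Subtype.val_injective.extend_apply _ _ _
  set g : V → V → ℝ := fun v w => if w ∈ U ∧ G.Adj v w then x v ^ 2 else 0
  -- an edge avoiding `U` stays inside one component, where `x` is constant
  have hedge : ∀ v w, (if G.Adj v w then (x v - x w) ^ 2 else 0) = g v w + g w v := by
    intro v w
    by_cases hvw : G.Adj v w
    · by_cases hv : v ∈ U <;> by_cases hw : w ∈ U
      · simp [g, hvw, hv, hw, hxU v hv, hxU w hw]
      · simp [g, hvw, hvw.symm, hv, hw, hxU v hv]
      · simp [g, hvw, hvw.symm, hv, hw, hxU w hw]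
      · have : x v = x w := by
          rw [hx ⟨v, hv⟩, hx ⟨w, hw⟩]
          exact hf _ _ (by simpa using hvw)
        simp [g, hvw, hv, hw, this]
    · simp [g, hvw, G.adj_comm w v]
  rw [← toLinearMap₂'_apply', lapMatrix_toLinearMap₂']
  simp_rw [hedge, Finset.sum_add_distrib]
  rw [Finset.sum_comm (f := fun v w => g w v), add_self_div_two,
    Fintype.sum_eq_sum_subtype_of_eq_zero (s := ((↑U : Set V)ᶜ : Set V)) fun v hv =>
      Finset.sum_eq_zero fun w _ => by simp [g, hxU v (by simpa using hv)]]
  simp only [g, hx]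

theorem Connected.eig_one_mul_le_edgesToCut (hconn : G.Connected)
    {C D : (G.induce ((↑U : Set V)ᶜ)).ConnectedComponent} (hCD : C ≠ D) :
    eig (G.posSemidef_lapMatrix ℝ).isHermitian 1 *
        (compSize C * compSize D ^ 2 + compSize D * compSize C ^ 2 : ℝ) ≤
      edgesToCut C * compSize D ^ 2 + edgesToCut D * compSize C ^ 2 := by
  classical
  set a : ℝ := (compSize D : ℝ)
  set b : ℝ := (compSize C : ℝ)
  set mk := (G.induce ((↑U : Set V)ᶜ)).connectedComponentMk
  set f : ((↑U : Set V)ᶜ : Set V) → ℝ :=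
    fun i => a * (if mk i = C then 1 else 0) - b * (if mk i = D then 1 else 0)
  have hf : ∀ i j, (G.induce ((↑U : Set V)ᶜ)).Adj i j → f i = f j := fun i j h => by
    simp only [f, mk, ConnectedComponent.sound h.reachable]
  have hsq : ∀ i, f i ^ 2 =
      a ^ 2 * (if mk i = C then 1 else 0) + b ^ 2 * (if mk i = D then 1 else 0) := by
    intro i
    by_cases hC : mk i = C
    · simp [f, hC, hCD]
    · by_cases hD : mk i = D <;> simp [f, hC, hD, hCD.symm]
  have hsum : ∑ i, f i = 0 := by
    simp only [f, Finset.sum_sub_distrib, ← Finset.mul_sum, mk, ← compSize_eq_sum, a, b]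
    ring
  have hray := hconn.eig_one_mul_dotProduct_le_of_sum_eq_zero
    (x := Function.extend Subtype.val f 0) (by rw [Fintype.sum_extend_zero, hsum])
  rw [extend_zero_dotProduct_extend_zero, extend_dotProduct_lapMatrix_mulVec_extend f hf] at hray
  convert hray using 1
  · simp_rw [← sq, hsq, Finset.sum_add_distrib, ← Finset.mul_sum, mk, ← compSize_eq_sum,
      a, b]
    ring
  · simp only [edgesToCut_eq_sum, hsq, Finset.sum_mul, ← Finset.sum_add_distrib]
    refine Finset.sum_congr rfl fun i _ => Finset.sum_congr rfl fun j _ => ?_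
    by_cases h : j ∈ U ∧ G.Adj i j <;> simp [h, mk, mul_comm]

theorem Connected.edgesToCut_div_compSize_pair_nonneg (hconn : G.Connected)
    {C D : (G.induce ((↑U : Set V)ᶜ)).ConnectedComponent} (hCD : C ≠ D) :
    ((edgesToCut C : ℝ) / compSize C - eig (G.posSemidef_lapMatrix ℝ).isHermitian 1) * compSize D
      + ((edgesToCut D : ℝ) / compSize D - eig (G.posSemidef_lapMatrix ℝ).isHermitian 1)
        * compSize C ≥ 0 := by
  set μ := eig (G.posSemidef_lapMatrix ℝ).isHermitian 1
  have hC : (0 : ℝ) < compSize C := mod_cast compSize_pos C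
  have hD : (0 : ℝ) < compSize D := mod_cast compSize_pos D
  have hscaled : (((edgesToCut C : ℝ) / compSize C - μ) * compSize D
      + ((edgesToCut D : ℝ) / compSize D - μ) * compSize C) * (compSize C * compSize D)
      = edgesToCut C * compSize D ^ 2 + edgesToCut D * compSize C ^ 2
        - μ * (compSize C * compSize D ^ 2 + compSize D * compSize C ^ 2) := by
    field_simp
    ring
  refine le_of_mul_le_mul_right ?_ (mul_pos hC hD)
  linarith [hconn.eig_one_mul_le_edgesToCut hCD]

end SimpleGraph

theorem pairwise_component_bound_general {V : Type*} [Fintype V] [DecidableEq V]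
    (G : SimpleGraph V) [DecidableRel G.Adj]
    (hconn : G.Connected)
    (U : Finset V) :
    (∀ C D : (G.induce ((↑U : Set V)ᶜ)).ConnectedComponent, C ≠ D →
      ((edgesToCut C : ℝ) / (compSize C : ℝ)
          - eig (Matrix.PosSemidef.isHermitian (G.posSemidef_lapMatrix ℝ)) 1) * (compSize D : ℝ)
        + ((edgesToCut D : ℝ) / (compSize D : ℝ)
          - eig (Matrix.PosSemidef.isHermitian (G.posSemidef_lapMatrix ℝ)) 1) * (compSize C : ℝ)
        ≥ 0) ∧
    {C : (G.induce ((↑U : Set V)ᶜ)).ConnectedComponent |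
        (edgesToCut C : ℝ) / (compSize C : ℝ) <
          eig (Matrix.PosSemidef.isHermitian (G.posSemidef_lapMatrix ℝ)) 1}.Subsingleton := by
  have hpos : ∀ C : (G.induce ((↑U : Set V)ᶜ)).ConnectedComponent, (0 : ℝ) < compSize C :=
    fun C => mod_cast SimpleGraph.compSize_pos C
  refine ⟨fun C D hCD => hconn.edgesToCut_div_compSize_pair_nonneg hCD,
    fun C hC D hD => by_contra fun hCD => ?_⟩
  have := hconn.edgesToCut_div_compSize_pair_nonneg hCD
  have := mul_neg_of_neg_of_pos (sub_neg.mpr hC) (hpos D)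
  have := mul_neg_of_neg_of_pos (sub_neg.mpr hD) (hpos C)
  linarith

/-- Pairwise inequality `(e_i/|H_i| - μ₂)|H_j| + (e_j/|H_j| - μ₂)|H_i| ≥ 0`, and consequently
at most one component satisfies `e_i/|H_i| < μ₂`. -/
theorem pairwise_component_bound {V : Type*} [Fintype V] [DecidableEq V]
    (G : SimpleGraph V) [DecidableRel G.Adj]
    (hconn : G.Connected) (hnc : G ≠ ⊤)
    (U : Finset V) (hcut : 1 < numComponents G U) :
    (∀ C D : (G.induce ((↑U : Set V)ᶜ)).ConnectedComponent, C ≠ D →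
      ((edgesToCut C : ℝ) / (compSize C : ℝ)
          - eig (Matrix.PosSemidef.isHermitian (G.posSemidef_lapMatrix ℝ)) 1) * (compSize D : ℝ)
        + ((edgesToCut D : ℝ) / (compSize D : ℝ)
          - eig (Matrix.PosSemidef.isHermitian (G.posSemidef_lapMatrix ℝ)) 1) * (compSize C : ℝ)
        ≥ 0) ∧
    {C : (G.induce ((↑U : Set V)ᶜ)).ConnectedComponent |
        (edgesToCut C : ℝ) / (compSize C : ℝ) <
          eig (Matrix.PosSemidef.isHermitian (G.posSemidef_lapMatrix ℝ)) 1}.Subsingleton :=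
  pairwise_component_bound_general G hconn U
end
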